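/- Fix a time t ≥ 0 and suppose Assumption H3 holds. Then lim_{q→+∞} X(t,q)/q = 1 and lim_{x→+∞} Q(t,x)/x = 1. -/
import Mathlib


noncomputable section
open Set Filter

/-- The drift `F = β C₁ - α`. -/
def Fdrift (α β : ℝ → ℝ) (C1 : ℝ) : ℝ → ℝ := fun x => β x * C1 - α x

/-- The diffusion coefficient `D = β C₁ + α`. -/
def Ddiff (α β : ℝ → ℝ) (C1 : ℝ) : ℝ → ℝ := fun x => β x * C1 + α x

/-- `G(x) = ∫_M^x dy / F(y)`. -/
def Gfun (α β : ℝ → ℝ) (C1 M : ℝ) : ℝ → ℝ := fun x =>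
  ∫ y in M..x, 1 / Fdrift α β C1 y

/-- Assumption H3: `α, β` smooth, nondecreasing and nonnegative (on `ℝ₊`), with
`α^{(k)}(x) = O(x^{γ-k})`, `β^{(k)}(x) = O(x^{γ-k})` as `x → ∞` for `k = 0, 1, 2`,
`0 ≤ γ ≤ 1/2`, `C₁ > 0` fixed, and there are `M, K₋, K₊ > 0` such that
`F = β C₁ - α` is positive and increasing on `[M, ∞)` with
`K₋ x^γ ≤ F(x) ≤ K₊ x^γ` there. -/
def HypH3 (α β : ℝ → ℝ) (γ C1 M Km Kp : ℝ) : Prop :=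
  ContDiff ℝ (⊤ : ℕ∞) α ∧ ContDiff ℝ (⊤ : ℕ∞) β ∧
  MonotoneOn α (Ici 0) ∧ MonotoneOn β (Ici 0) ∧
  (∀ x ∈ Ici (0 : ℝ), 0 ≤ α x ∧ 0 ≤ β x) ∧
  0 ≤ γ ∧ γ ≤ 1 / 2 ∧
  (∀ k : ℕ, k ≤ 2 →
    ((fun x => iteratedDeriv k α x) =O[atTop] fun x : ℝ => x ^ (γ - (k : ℝ))) ∧
    ((fun x => iteratedDeriv k β x) =O[atTop] fun x : ℝ => x ^ (γ - (k : ℝ)))) ∧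
  0 < C1 ∧ 0 < M ∧ 0 < Km ∧ 0 < Kp ∧
  StrictMonoOn (Fdrift α β C1) (Ici M) ∧
  ∀ x ∈ Ici M, 0 < Fdrift α β C1 x ∧
    Km * x ^ γ ≤ Fdrift α β C1 x ∧ Fdrift α β C1 x ≤ Kp * x ^ γ

/-- `Ginv` is the inverse function `G⁻¹ : [0, ∞) → [M, ∞)` of `G`. -/
def IsGinv (α β : ℝ → ℝ) (C1 M : ℝ) (Ginv : ℝ → ℝ) : Prop :=
  (∀ x ∈ Ici M, Ginv (Gfun α β C1 M x) = x) ∧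
  ∀ y ∈ Ici (0 : ℝ), Ginv y ∈ Ici M ∧ Gfun α β C1 M (Ginv y) = y

private lemma contF {α β : ℝ → ℝ} {C1 : ℝ} (hα : ContDiff ℝ (⊤ : ℕ∞) α) (hβ : ContDiff ℝ (⊤ : ℕ∞) β) :
    Continuous (Fdrift α β C1) := by
  unfold Fdrift
  exact (hβ.continuous.mul continuous_const).sub hα.continuous

private lemma intInt {F : ℝ → ℝ} (hF : Continuous F) {M : ℝ}
    (hpos : ∀ x ∈ Ici M, 0 < F x) {u v : ℝ} (hu : M ≤ u) (hv : M ≤ v) :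
    IntervalIntegrable (fun y => 1 / F y) MeasureTheory.volume u v := by
  apply ContinuousOn.intervalIntegrable
  apply ContinuousOn.div continuousOn_const hF.continuousOn
  intro y hy
  exact (hpos y (le_trans (le_min hu hv) hy.1)).ne'

private lemma Gdiff_eq {α β : ℝ → ℝ} {C1 M : ℝ}
    (hα : ContDiff ℝ (⊤ : ℕ∞) α) (hβ : ContDiff ℝ (⊤ : ℕ∞) β)
    (hpos : ∀ x ∈ Ici M, 0 < Fdrift α β C1 x)
    {a b : ℝ} (ha : M ≤ a) (hb : M ≤ b) :
    Gfun α β C1 M b - Gfun α β C1 M a = ∫ y in a..b, 1 / Fdrift α β C1 y := by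
  have hF := contF hα hβ (C1 := C1)
  have h1 : IntervalIntegrable (fun y => 1 / Fdrift α β C1 y) MeasureTheory.volume M a :=
    intInt hF hpos le_rfl ha
  have h2 : IntervalIntegrable (fun y => 1 / Fdrift α β C1 y) MeasureTheory.volume a b :=
    intInt hF hpos ha hb
  have := intervalIntegral.integral_add_adjacent_intervals h1 h2
  simp only [Gfun, ← this]
  ring

private lemma Gdiff_bounds {α β : ℝ → ℝ} {C1 M : ℝ}
    (hα : ContDiff ℝ (⊤ : ℕ∞) α) (hβ : ContDiff ℝ (⊤ : ℕ∞) β)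
    (hpos : ∀ x ∈ Ici M, 0 < Fdrift α β C1 x)
    (hmono : MonotoneOn (Fdrift α β C1) (Ici M))
    {a b : ℝ} (ha : M ≤ a) (hab : a ≤ b) :
    (b - a) / Fdrift α β C1 b ≤ Gfun α β C1 M b - Gfun α β C1 M a ∧
    Gfun α β C1 M b - Gfun α β C1 M a ≤ (b - a) / Fdrift α β C1 a := by
  have hF := contF hα hβ (C1 := C1)
  set F := Fdrift α β C1 with hFdef
  have hb : M ≤ b := ha.trans hab
  have h2 : IntervalIntegrable (fun y => 1 / F y) MeasureTheory.volume a b :=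
    intInt hF hpos ha hb
  rw [Gdiff_eq hα hβ hpos ha hb]
  constructor
  · have hle : ∫ y in a..b, (1 / F b) ≤ ∫ y in a..b, 1 / F y := by
      apply intervalIntegral.integral_mono_on hab (intervalIntegrable_const) h2
      intro y hy
      have hyM : M ≤ y := ha.trans hy.1
      exact one_div_le_one_div_of_le (hpos y hyM) (hmono hyM hb hy.2)
    simpa [smul_eq_mul, div_eq_mul_inv, mul_comm] using hle
  · have hle : ∫ y in a..b, 1 / F y ≤ ∫ y in a..b, (1 / F a) := by
      apply intervalIntegral.integral_mono_on hab h2 (intervalIntegrable_const)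
      intro y hy
      have hyM : M ≤ y := ha.trans hy.1
      exact one_div_le_one_div_of_le (hpos a ha) (hmono ha hyM hy.1)
    simpa [smul_eq_mul, div_eq_mul_inv, mul_comm] using hle
set_option maxHeartbeats 1000000 in
/-- Under Assumption H3, for every fixed `t ≥ 0`, with `X(t,q) = G⁻¹(G(q) + t)` and
`Q(t,x) = G⁻¹(G(x) - t)`, one has `X(t,q)/q → 1` as `q → ∞` and `Q(t,x)/x → 1` as
`x → ∞`. -/
theorem stmt12 (α β : ℝ → ℝ) (γ C1 M Km Kp : ℝ) (h3 : HypH3 α β γ C1 M Km Kp)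
    (Ginv : ℝ → ℝ) (hGinv : IsGinv α β C1 M Ginv) (t : ℝ) (ht : 0 ≤ t) :
    Tendsto (fun q => Ginv (Gfun α β C1 M q + t) / q) atTop (nhds 1) ∧
    Tendsto (fun x => Ginv (Gfun α β C1 M x - t) / x) atTop (nhds 1) := by
  obtain ⟨hα, hβ, -, -, -, hγ0, hγh, -, hC1, hM, hKm, hKp, hFstrict, hFbnd⟩ := h3
  have hpos : ∀ x ∈ Ici M, 0 < Fdrift α β C1 x := fun x hx => (hFbnd x hx).1
  have hmono : MonotoneOn (Fdrift α β C1) (Ici M) := hFstrict.monotoneOn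
  set F := Fdrift α β C1 with hFdef
  set G := Gfun α β C1 M with hGdef
  set c := t * Kp with hcdef
  have hc : 0 ≤ c := mul_nonneg ht hKp.le
  -- F x ≤ Kp * √x for x ≥ 1, x ≥ M
  have hFsqrt : ∀ x, M ≤ x → 1 ≤ x → F x ≤ Kp * Real.sqrt x := by
    intro x hxM hx1
    have h1 : F x ≤ Kp * x ^ γ := (hFbnd x hxM).2.2
    have h2 : x ^ γ ≤ x ^ (1/2 : ℝ) := Real.rpow_le_rpow_of_exponent_le hx1 hγh
    have h3 : Real.sqrt x = x ^ (1/2 : ℝ) := Real.sqrt_eq_rpow x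
    nlinarith [hKp]
  -- G M = 0 and G nonneg on [M, ∞)
  have hGM : G M = 0 := intervalIntegral.integral_same
  have hGnn : ∀ q, M ≤ q → 0 ≤ G q := by
    intro q hq
    have hb := (Gdiff_bounds hα hβ hpos hmono le_rfl hq).1
    simp only [← hGdef, ← hFdef] at hb
    have hp := hpos q (by exact hq)
    have : 0 ≤ (q - M) / F q := div_nonneg (by linarith) hp.le
    rw [hGM] at hb; linarith
  have hsq : Tendsto Real.sqrt atTop atTop := by
    apply tendsto_atTop_atTop.mpr
    intro b
    refine ⟨(max b 0) ^ 2, fun a ha => le_trans (le_max_left b 0) ?_⟩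
    rw [← Real.sqrt_sq (le_max_right b 0)]
    exact Real.sqrt_le_sqrt ha
  constructor
  · -- X part
    set M1 := max (max M 1) (4 * c ^ 2 + 1) with hM1
    have key : ∀ q, M1 ≤ q →
        1 ≤ Ginv (G q + t) / q ∧ Ginv (G q + t) / q ≤ 1 + c * Real.sqrt 2 / Real.sqrt q := by
      intro q hq
      have hqM : M ≤ q := le_trans (le_trans (le_max_left _ _) (le_max_left _ _)) hq
      have hq1 : (1 : ℝ) ≤ q := le_trans (le_trans (le_max_right _ _) (le_max_left _ _)) hq
      have hqc : 4 * c ^ 2 + 1 ≤ q := le_trans (le_max_right _ _) hq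
      have hq0 : (0 : ℝ) < q := lt_of_lt_of_le one_pos hq1
      have hGqt : 0 ≤ G q + t := add_nonneg (hGnn q hqM) ht
      obtain ⟨hXM, hGX⟩ := hGinv.2 _ hGqt
      set X := Ginv (G q + t) with hXdef
      have hXM' : M ≤ X := hXM
      have hqX : q ≤ X := by
        by_contra h
        push_neg at h
        have hb := (Gdiff_bounds hα hβ hpos hmono hXM' h.le).1
        have : 0 < (q - X) / F q := div_pos (by linarith) (hpos q hqM)
        rw [hGX] at hb
        simp only [← hGdef, ← hFdef] at hb this
        linarith [hGnn q hqM]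
      have hX1 : (1 : ℝ) ≤ X := hq1.trans hqX
      have hX0 : (0 : ℝ) ≤ X := by linarith
      -- X - q ≤ c √X
      have hkey : X - q ≤ c * Real.sqrt X := by
        have hb := (Gdiff_bounds hα hβ hpos hmono hqM hqX).1
        rw [hGX] at hb
        simp only [← hGdef, ← hFdef] at hb
        have hb' : (X - q) / F X ≤ t := by linarith
        have hFX := hpos X hXM'
        have h1 : X - q ≤ t * F X := by
          rw [div_le_iff₀ hFX] at hb'; linarith
        have h2 : F X ≤ Kp * Real.sqrt X := hFsqrt X hXM' hX1
        calc X - q ≤ t * F X := h1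
          _ ≤ t * (Kp * Real.sqrt X) := by
              exact mul_le_mul_of_nonneg_left h2 ht
          _ = c * Real.sqrt X := by rw [hcdef]; ring
      have hsX : 2 * c < Real.sqrt X := by
        rw [← Real.sqrt_sq (by linarith : (0:ℝ) ≤ 2 * c)]
        apply Real.sqrt_lt_sqrt (by positivity)
        nlinarith
      have hXX : Real.sqrt X * Real.sqrt X = X := Real.mul_self_sqrt hX0
      have hsX0 : 0 < Real.sqrt X := by linarith [hsX, hc]
      have hX2q : X ≤ 2 * q := by nlinarith
      have hup : X ≤ q + c * Real.sqrt 2 * Real.sqrt q := by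
        have h1 : Real.sqrt X ≤ Real.sqrt (2 * q) := Real.sqrt_le_sqrt hX2q
        have h2 : Real.sqrt (2 * q) = Real.sqrt 2 * Real.sqrt q := Real.sqrt_mul (by norm_num) q
        nlinarith
      constructor
      · exact (one_le_div hq0).mpr hqX
      · have hq' : Real.sqrt q / q = 1 / Real.sqrt q := Real.sqrt_div_self'
        calc X / q ≤ (q + c * Real.sqrt 2 * Real.sqrt q) / q := by gcongr
          _ = 1 + c * Real.sqrt 2 / Real.sqrt q := by
              rw [add_div, div_self hq0.ne', mul_div_assoc, hq', mul_one_div]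
    apply tendsto_of_tendsto_of_tendsto_of_le_of_le' tendsto_const_nhds
      (f := fun q => Ginv (G q + t) / q)
      (h := fun q => 1 + c * Real.sqrt 2 / Real.sqrt q)
    · have h0 : Tendsto (fun q : ℝ => c * Real.sqrt 2 / Real.sqrt q) atTop (nhds 0) :=
        Tendsto.div_atTop tendsto_const_nhds hsq
      simpa using tendsto_const_nhds.add h0
    · filter_upwards [eventually_ge_atTop M1] with q hq using (key q hq).1
    · filter_upwards [eventually_ge_atTop M1] with q hq using (key q hq).2
  · -- Q part
    set M1 := max M 1 with hM1
    have hM1M : M ≤ M1 := le_max_left _ _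
    have hM11 : (1 : ℝ) ≤ M1 := le_max_right _ _
    have hM10 : (0 : ℝ) < M1 := lt_of_lt_of_le one_pos hM11
    -- G tends to infinity
    have hGtop : Tendsto G atTop atTop := by
      have hbound : ∀ x, M1 ≤ x → G M1 + (1 / Kp) * Real.log (x / M1) ≤ G x := by
        intro x hx
        have hxM : M ≤ x := hM1M.trans hx
        have hx0 : (0 : ℝ) < x := lt_of_lt_of_le hM10 hx
        have hFc := contF hα hβ (C1 := C1)
        have hI1 : IntervalIntegrable (fun y => 1 / Kp * (1 / y)) MeasureTheory.volume M1 x := by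
          apply ContinuousOn.intervalIntegrable
          apply ContinuousOn.mul continuousOn_const
          apply ContinuousOn.div continuousOn_const continuousOn_id
          intro y hy
          have : M1 ≤ y := le_trans (le_min le_rfl hx) hy.1
          exact (lt_of_lt_of_le hM10 this).ne'
        have hI2 : IntervalIntegrable (fun y => 1 / F y) MeasureTheory.volume M1 x :=
          intInt hFc hpos hM1M hxM
        have hmle : ∫ y in M1..x, 1 / Kp * (1 / y) ≤ ∫ y in M1..x, 1 / F y := by
          apply intervalIntegral.integral_mono_on hx hI1 hI2
          intro y hy
          have hy1 : (1 : ℝ) ≤ y := hM11.trans hy.1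
          have hyM : M ≤ y := hM1M.trans hy.1
          have hy0 : (0 : ℝ) < y := lt_of_lt_of_le one_pos hy1
          have h1 : F y ≤ Kp * y ^ γ := (hFbnd y hyM).2.2
          have h2 : y ^ γ ≤ y ^ (1 : ℝ) := Real.rpow_le_rpow_of_exponent_le hy1 (by linarith)
          rw [Real.rpow_one] at h2
          have h3 : F y ≤ Kp * y := by nlinarith
          have h4 : 1 / (Kp * y) ≤ 1 / F y := one_div_le_one_div_of_le (hpos y hyM) h3
          calc 1 / Kp * (1 / y) = 1 / (Kp * y) := by rw [div_mul_div_comm, one_mul]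
            _ ≤ 1 / F y := h4
        have hint : ∫ y in M1..x, 1 / Kp * (1 / y) = 1 / Kp * Real.log (x / M1) := by
          rw [intervalIntegral.integral_const_mul]
          congr 1
          apply integral_one_div
          intro h
          have : M1 ≤ (0 : ℝ) := le_trans (le_min le_rfl hx) h.1
          linarith
        have hGd := Gdiff_eq hα hβ hpos (a := M1) (b := x) hM1M hxM
        simp only [← hGdef, ← hFdef] at hGd
        rw [hint] at hmle
        linarith
      apply tendsto_atTop_mono' atTop
      · filter_upwards [eventually_ge_atTop M1] with x hx using hbound x hx
      · apply tendsto_atTop_add_const_left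
        apply Tendsto.const_mul_atTop (by positivity : (0:ℝ) < 1 / Kp)
        exact Real.tendsto_log_atTop.comp (Tendsto.atTop_div_const hM10 tendsto_id)
    have key : ∀ x, M1 ≤ x → t ≤ G x →
        1 - c / Real.sqrt x ≤ Ginv (G x - t) / x ∧ Ginv (G x - t) / x ≤ 1 := by
      intro x hx hGxt
      have hxM : M ≤ x := hM1M.trans hx
      have hx1 : (1 : ℝ) ≤ x := hM11.trans hx
      have hx0 : (0 : ℝ) < x := lt_of_lt_of_le one_pos hx1
      obtain ⟨hQM, hGQ⟩ := hGinv.2 _ (by linarith : (0:ℝ) ≤ G x - t)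
      set Q := Ginv (G x - t) with hQdef
      simp only [← hGdef] at hGQ
      have hQM' : M ≤ Q := hQM
      have hQx : Q ≤ x := by
        by_contra h
        push_neg at h
        have hb := (Gdiff_bounds hα hβ hpos hmono hxM h.le).1
        simp only [← hGdef, ← hFdef] at hb
        have : 0 < (Q - x) / F Q := div_pos (by linarith) (hpos Q hQM')
        rw [hGQ] at hb
        linarith
      have hkey : x - Q ≤ c * Real.sqrt x := by
        have hb := (Gdiff_bounds hα hβ hpos hmono hQM' hQx).1
        simp only [← hGdef, ← hFdef] at hb
        rw [hGQ] at hb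
        have hb' : (x - Q) / F x ≤ t := by linarith
        have hFx := hpos x hxM
        have h1 : x - Q ≤ t * F x := by
          rw [div_le_iff₀ hFx] at hb'; linarith
        have h2 : F x ≤ Kp * Real.sqrt x := hFsqrt x hxM hx1
        calc x - Q ≤ t * F x := h1
          _ ≤ t * (Kp * Real.sqrt x) := mul_le_mul_of_nonneg_left h2 ht
          _ = c * Real.sqrt x := by rw [hcdef]; ring
      constructor
      · have hq' : Real.sqrt x / x = 1 / Real.sqrt x := Real.sqrt_div_self'
        have hlow : x - c * Real.sqrt x ≤ Q := by linarith
        have hxx : Real.sqrt x * Real.sqrt x = x := Real.mul_self_sqrt hx0.le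
        have hsx0 : (0:ℝ) < Real.sqrt x := Real.sqrt_pos.mpr hx0
        have heq : (x - c * Real.sqrt x) / x = 1 - c / Real.sqrt x := by
          rw [sub_div, div_self hx0.ne']
          congr 1
          rw [div_eq_div_iff hx0.ne' hsx0.ne', mul_assoc, hxx]
        calc 1 - c / Real.sqrt x = (x - c * Real.sqrt x) / x := heq.symm
          _ ≤ Q / x := by gcongr
      · exact (div_le_one hx0).mpr hQx
    apply tendsto_of_tendsto_of_tendsto_of_le_of_le'
      (g := fun x => 1 - c / Real.sqrt x) (h := fun _ => (1 : ℝ))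
    · have h0 : Tendsto (fun x : ℝ => c / Real.sqrt x) atTop (nhds 0) :=
        Tendsto.div_atTop tendsto_const_nhds hsq
      simpa using tendsto_const_nhds.sub h0
    · exact tendsto_const_nhds
    · filter_upwards [eventually_ge_atTop M1, hGtop.eventually_ge_atTop t] with x h1 h2
        using (key x h1 h2).1
    · filter_upwards [eventually_ge_atTop M1, hGtop.eventually_ge_atTop t] with x h1 h2
        using (key x h1 h2).2
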